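/- Let d ≥ 3 and let Φ be the quantum channel on d×d complex matrices with Kraus operators { (1/√(d−1)) E_{ij} : i, j ∈ [d], i ≠ j }. Then η_tr(Φ) < 1 while the quantum Doeblin coefficient vanishes: α(Φ) = 0. -/

import Mathlib

open Matrix Kronecker BigOperators
open scoped ComplexOrder

noncomputable section

/-- The trace norm (sum of singular values) of a complex matrix: `tr √(AᴴA)`. -/
def traceNorm {m n : Type*} [Fintype m] [Fintype n] [DecidableEq n] (A : Matrix m n ℂ) : ℝ :=
  (let hA := (Matrix.posSemidef_conjTranspose_mul_self A).1;
    (hA.eigenvectorUnitary.1 * diagonal (fun i => ((√(hA.eigenvalues i) : ℝ) : ℂ)) *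
      (star hA.eigenvectorUnitary : Matrix n n ℂ))).trace.re

/-- A density matrix: positive semidefinite with trace one. -/
def IsDensity {n : Type*} [Fintype n] [DecidableEq n] (ρ : Matrix n n ℂ) : Prop :=
  ρ.PosSemidef ∧ ρ.trace = 1

/-- Trace norm contraction coefficient of a map on matrices. -/
def etaTr {dA dB : ℕ} (Φ : Matrix (Fin dA) (Fin dA) ℂ → Matrix (Fin dB) (Fin dB) ℂ) : ℝ :=
  sSup {r : ℝ | ∃ ρ σ : Matrix (Fin dA) (Fin dA) ℂ, IsDensity ρ ∧ IsDensity σ ∧ ρ ≠ σ ∧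
    r = traceNorm (Φ ρ - Φ σ) / traceNorm (ρ - σ)}

/-- Optimal success probability for transmitting one of `k` messages through `Φ`. -/
def Psucc {dA dB : ℕ} (Φ : Matrix (Fin dA) (Fin dA) ℂ → Matrix (Fin dB) (Fin dB) ℂ)
    (k : ℕ) : ℝ :=
  sSup {r : ℝ | ∃ (M : Fin k → Matrix (Fin dB) (Fin dB) ℂ)
      (ρ : Fin k → Matrix (Fin dA) (Fin dA) ℂ),
    (∀ i, (M i).PosSemidef) ∧ (∑ i, M i = 1) ∧ (∀ i, IsDensity (ρ i)) ∧
    r = (1 / (k : ℝ)) * ∑ i, ((M i * Φ (ρ i)).trace).re}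

/-- The Euclidean (ℓ₂) norm of a complex vector. -/
def l2norm {n : Type*} [Fintype n] (v : n → ℂ) : ℝ :=
  Real.sqrt (∑ i, ‖v i‖ ^ 2)

/-- Choi state of a map on matrices: `(1/dA) ∑ᵢⱼ Eᵢⱼ ⊗ Φ(Eᵢⱼ)`. -/
def choi {dA dB : ℕ} (Φ : Matrix (Fin dA) (Fin dA) ℂ → Matrix (Fin dB) (Fin dB) ℂ) :
    Matrix (Fin dA × Fin dB) (Fin dA × Fin dB) ℂ :=
  (dA : ℂ)⁻¹ • ∑ i : Fin dA, ∑ j : Fin dA,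
    (Matrix.single i j (1 : ℂ)) ⊗ₖ (Φ (Matrix.single i j (1 : ℂ)))

/-! The channel acts as `Φ x = (d - 1)⁻¹ • diag (tr x - x₁₁, …, tr x - x_dd)`. For density
matrices the traces cancel, so `Φ ρ - Φ σ` is `-(d - 1)⁻¹` times the diagonal part of `ρ - σ`, and
pinching to the diagonal does not increase the trace norm: `η_tr(Φ) ≤ 1 / (d - 1) ≤ 1 / 2`.
The Choi matrix is diagonal with zero entries at `((i, i), (i, i))`, so `I ⊗ X ≼ J(Φ)` forces
`X i i ≤ 0` for all `i`, i.e. `tr X ≤ 0`, and `X = 0` attains it. -/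

theorem sum_offDiag_single_mul_mul_conjTranspose {n R : Type*} [Fintype n] [DecidableEq n]
    [Ring R] [StarRing R] (x : Matrix n n R) :
    ∑ p : {p : n × n // p.1 ≠ p.2}, single p.1.1 p.1.2 (1 : R) * x * (single p.1.1 p.1.2 1)ᴴ =
      diagonal fun k => x.trace - x k k := by
  simp only [conjTranspose_single, star_one, single_mul_mul_single, one_mul, mul_one]
  ext k l
  rw [Matrix.sum_apply, ← Finset.sum_subtype (Finset.univ.filter fun p : n × n => p.1 ≠ p.2)
    (by simp) (fun p => single p.1 p.1 (x p.2 p.2) k l), Finset.sum_filter,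
    Fintype.sum_prod_type]
  rcases eq_or_ne k l with rfl | hkl
  · simp [single_apply, trace, Finset.sum_ite, ← ne_eq, Finset.filter_ne, Finset.sum_erase_eq_sub]
  · rw [diagonal_apply_ne _ hkl]
    refine Finset.sum_eq_zero fun i _ => Finset.sum_eq_zero fun j _ => ?_
    simp only [single_apply]
    grind

section TraceNorm

variable {m n : Type*} [Fintype m] [Fintype n] [DecidableEq n]

open scoped MatrixOrder

theorem traceNorm_eq_re_trace_of_sq_eq {A : Matrix m n ℂ} {B : Matrix n n ℂ}
    (hB : B.PosSemidef) (hsq : B ^ 2 = Aᴴ * A) : traceNorm A = B.trace.re := by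
  have hA := posSemidef_conjTranspose_mul_self A
  change (hA.1.cfc Real.sqrt).trace.re = _
  rw [← hA.1.cfc_eq, ← cfcₙ_eq_cfc (hf0 := Real.sqrt_zero), ← CFC.sqrt_eq_real_sqrt _ hA.nonneg,
    (CFC.sqrt_eq_iff _ _ hA.nonneg hB.nonneg).mpr (by rw [← hsq, sq])]

theorem traceNorm_diagonal (g : n → ℂ) : traceNorm (diagonal g) = ∑ i, ‖g i‖ := by
  have hB : (diagonal fun i => (‖g i‖ : ℂ)).PosSemidef :=
    posSemidef_diagonal_iff.mpr fun i => Complex.zero_le_real.mpr (norm_nonneg _)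
  rw [traceNorm_eq_re_trace_of_sq_eq hB, trace_diagonal, Complex.re_sum]
  · simp
  · simp [sq, diagonal_conjTranspose, Complex.conj_mul', Pi.star_def]

theorem Matrix.IsHermitian.cfc_apply_self {A : Matrix n n ℂ} (hA : A.IsHermitian) (f : ℝ → ℝ)
    (i : n) : hA.cfc f i i =
      ∑ b, ((f (hA.eigenvalues b) * ‖(hA.eigenvectorUnitary : Matrix n n ℂ) i b‖ ^ 2 : ℝ) : ℂ) := by
  rw [IsHermitian.cfc, Unitary.conjStarAlgAut_apply, mul_apply]
  simp only [mul_diagonal, star_apply]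
  refine Finset.sum_congr rfl fun b _ => ?_
  rw [mul_right_comm, Complex.star_def, Complex.mul_conj']
  simp [mul_comm]

/- `|A| := cfc |·| A` has trace `traceNorm A`, and in an eigenbasis of `A` each `|A i i|` is
bounded by `|A| i i`. -/
theorem sum_norm_diag_le_traceNorm {A : Matrix n n ℂ} (hA : A.IsHermitian) :
    ∑ i, ‖A i i‖ ≤ traceNorm A := by
  have hA' : IsSelfAdjoint A := hA
  have hB : (cfc (fun x : ℝ => |x|) A).PosSemidef :=
    nonneg_iff_posSemidef.mp (cfc_nonneg fun x _ => abs_nonneg x)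
  have hsq : cfc (fun x : ℝ => |x|) A ^ 2 = Aᴴ * A := by
    rw [← cfc_pow .., hA.eq, ← sq, cfc_congr fun x _ => sq_abs x, cfc_pow_id A 2 hA']
  rw [traceNorm_eq_re_trace_of_sq_eq hB hsq, trace, Complex.re_sum]
  refine Finset.sum_le_sum fun i _ => ?_
  conv_lhs => rw [← cfc_id' ℝ A]
  rw [hA.cfc_eq, hA.cfc_eq, diag_apply, hA.cfc_apply_self, hA.cfc_apply_self,
    Complex.re_sum]
  refine (norm_sum_le _ _).trans (Finset.sum_le_sum fun b _ => ?_)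
  rw [Complex.norm_real, Complex.ofReal_re, Real.norm_eq_abs, abs_mul, abs_sq]

end TraceNorm

theorem etaTr_le_of_eq_smul_diagonal {d : ℕ}
    {Φ : Matrix (Fin d) (Fin d) ℂ → Matrix (Fin d) (Fin d) ℂ} (c : ℂ)
    (hΦ : ∀ x, Φ x = c • diagonal fun k => x.trace - x k k) : etaTr Φ ≤ ‖c‖ := by
  refine Real.sSup_le ?_ (norm_nonneg c)
  rintro r ⟨ρ, σ, hρ, hσ, -, rfl⟩
  have hdiff : Φ ρ - Φ σ = diagonal fun k => -c * (ρ - σ) k k := by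
    rw [hΦ, hΦ, hρ.2, hσ.2, ← smul_sub, diagonal_sub, ← diagonal_smul]
    congr 1
    ext k
    simp only [Pi.smul_apply, Matrix.sub_apply, smul_eq_mul]
    ring
  have hpinch := sum_norm_diag_le_traceNorm (hρ.1.1.sub hσ.1.1)
  refine div_le_of_le_mul₀ ((Finset.sum_nonneg fun _ _ => norm_nonneg _).trans hpinch)
    (norm_nonneg c) ?_
  rw [hdiff, traceNorm_diagonal]
  simp only [norm_mul, norm_neg, ← Finset.mul_sum]
  gcongr

theorem choi_apply {dA dB : ℕ} (Φ : Matrix (Fin dA) (Fin dA) ℂ → Matrix (Fin dB) (Fin dB) ℂ)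
    (a a' : Fin dA) (b b' : Fin dB) :
    choi Φ (a, b) (a', b') = (dA : ℂ)⁻¹ * Φ (single a a' 1) b b' := by
  simp [choi, Matrix.sum_apply, kroneckerMap_apply, single_apply, ite_and]

theorem choi_eq_diagonal_of_eq_smul_diagonal {d : ℕ}
    {Φ : Matrix (Fin d) (Fin d) ℂ → Matrix (Fin d) (Fin d) ℂ}
    (c : ℂ) (hΦ : ∀ x, Φ x = c • diagonal fun k => x.trace - x k k) :
    choi Φ = diagonal fun q => if q.1 = q.2 then 0 else (d : ℂ)⁻¹ * c := by
  ext ⟨a, b⟩ ⟨a', b'⟩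
  rw [choi_apply, hΦ]
  rcases eq_or_ne a a' with rfl | ha
  · rcases eq_or_ne b b' with rfl | hb
    · by_cases hab : a = b <;> simp [single_apply, hab]
    · simp [hb]
  · simp [diagonal_apply, trace_single_eq_of_ne _ _ _ ha, single_apply, ha]
    rintro - rfl rfl
    exact absurd rfl ha

theorem sSup_doeblin_eq_zero {n : Type*} [Fintype n] [DecidableEq n]
    {J : Matrix (n × n) (n × n) ℂ} (hJ : J.PosSemidef) (hJ0 : ∀ i, J (i, i) (i, i) = 0) :
    sSup {r : ℝ | ∃ X : Matrix n n ℂ, X.IsHermitian ∧ (J - 1 ⊗ₖ X).PosSemidef ∧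
      r = X.trace.re} = 0 := by
  refine IsGreatest.csSup_eq ⟨⟨0, isHermitian_zero, by simpa using hJ, by simp⟩, ?_⟩
  rintro r ⟨X, -, hX, rfl⟩
  have hdiag (i : n) : X i i ≤ 0 := by
    simpa [kroneckerMap_apply, hJ0] using hX.diag_nonneg (i := (i, i))
  exact (Complex.le_def.mp (Finset.sum_nonpos fun i _ => hdiag i)).1

/-- for `d ≥ 3`, the channel with Kraus operators `(1/√(d−1))·E_{ij}`,
`i ≠ j`, satisfies `η_tr(Φ) < 1` while its quantum Doeblin coefficient
`α(Φ) = sup{tr X : X Hermitian, I ⊗ X ≼ J(Φ)}` vanishes. -/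
theorem etaTr_lt_one_and_doeblin_zero {d : ℕ} (hd : 3 ≤ d)
    (K : {p : Fin d × Fin d // p.1 ≠ p.2} → Matrix (Fin d) (Fin d) ℂ)
    (hKdef : ∀ p, K p = ((Real.sqrt ((d : ℝ) - 1) : ℂ))⁻¹ •
      Matrix.single p.1.1 p.1.2 (1 : ℂ))
    (Φ : Matrix (Fin d) (Fin d) ℂ → Matrix (Fin d) (Fin d) ℂ)
    (hΦ : ∀ x, Φ x = ∑ p, K p * x * (K p)ᴴ) :
    etaTr Φ < 1 ∧
    sSup {r : ℝ | ∃ X : Matrix (Fin d) (Fin d) ℂ, X.IsHermitian ∧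
      (choi Φ - (1 : Matrix (Fin d) (Fin d) ℂ) ⊗ₖ X).PosSemidef ∧
      r = X.trace.re} = 0 := by
  have hd' : (2 : ℝ) ≤ d - 1 := by linarith [show (3 : ℝ) ≤ d by exact_mod_cast hd]
  have hΦ' (x : Matrix (Fin d) (Fin d) ℂ) :
      Φ x = ((((d : ℝ) - 1)⁻¹ : ℝ) : ℂ) • diagonal fun k => x.trace - x k k := by
    rw [hΦ, ← sum_offDiag_single_mul_mul_conjTranspose, Finset.smul_sum]
    refine Finset.sum_congr rfl fun p _ => ?_
    rw [hKdef]
    simp only [conjTranspose_smul, Matrix.smul_mul, Matrix.mul_smul, smul_smul]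
    congr 1
    rw [Complex.star_def, ← Complex.ofReal_inv, Complex.conj_ofReal, ← Complex.ofReal_mul,
      ← mul_inv, Real.mul_self_sqrt (by linarith)]
  refine ⟨(etaTr_le_of_eq_smul_diagonal _ hΦ').trans_lt ?_,
    sSup_doeblin_eq_zero ?_ fun i => ?_⟩
  · rw [Complex.norm_real, Real.norm_of_nonneg (by positivity)]
    exact inv_lt_one_of_one_lt₀ (by linarith)
  · rw [choi_eq_diagonal_of_eq_smul_diagonal _ hΦ']
    refine posSemidef_diagonal_iff.mpr fun q => ?_
    split_ifs
    · rfl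
    · positivity
  · simp [choi_eq_diagonal_of_eq_smul_diagonal _ hΦ']
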